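/- arXiv:2501.07873 — 2 statements merged into one kernel-verified Lean document; each statement's English description precedes it below -/
import Mathlib

section
/- Let α, β, γ, τ be real numbers with α, β, γ > 0. Both eigenvalues of the 2×2 matrix T = [[αβ, α], [τγαβ, τγα + |1-τ|]] have modulus strictly less than 1 if and only if α(β+γ) < 1 and 0 < τ < 2(1-αβ)/(1-αβ+αγ). -/
/-!
The eigenvalues of `T` are the roots of `λ² - tλ + d` with `t = tr T = αβ + ταγ + |1 - τ|` and
`d = det T = αβ|1 - τ|`. By the Schur–Cohn–Jury criterion both roots lie in the open unit disc iff
`|d| < 1` and `|t| < 1 + d`: for real roots `λ₁, λ₂` this is Vieta, as `1 ∓ t + d = (1 ∓ λ₁)(1 ∓ λ₂)`,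
and for a pair of conjugate roots `|λ|² = d`. Here `1 + d - t = (1 - αβ)(1 - |1 - τ|) - ταγ`, which
forces `αβ < 1` and `0 < τ < 2`, and the two cases `τ ≤ 1`, `τ > 1` give the stated conditions.
-/

open Complex

theorem Matrix.mem_spectrum_map_fin_two_iff {K L : Type*} [Field K] [Field L] [Algebra K L]
    (A : Matrix (Fin 2) (Fin 2) K) (μ : L) :
    μ ∈ spectrum L (A.map (algebraMap K L)) ↔
      μ ^ 2 - algebraMap K L A.trace * μ + algebraMap K L A.det = 0 := by
  simp [Matrix.mem_spectrum_iff_isRoot_charpoly, Matrix.charpoly_map, Matrix.charpoly_fin_two]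

theorem forall_quadratic_root_iff {K : Type*} [Field K] [NeZero (2 : K)] {t d s : K}
    (hs : s * s = t ^ 2 - 4 * d) (P : K → Prop) :
    (∀ z, z ^ 2 - t * z + d = 0 → P z) ↔ P ((t + s) / 2) ∧ P ((t - s) / 2) := by
  have hdiscrim : discrim 1 (-t) d = s * s := by rw [discrim, hs]; ring
  have hnorm_halfs (z : K) : z ^ 2 - t * z + d = 0 ↔ z = (t + s) / 2 ∨ z = (t - s) / 2 := by
    simpa [sq, sub_eq_add_neg] using quadratic_eq_zero_iff one_ne_zero hdiscrim z
  simp only [hnorm_halfs, or_imp, forall_and, forall_eq]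

theorem abs_lt_one_and_abs_lt_one_iff (r₁ r₂ : ℝ) :
    |r₁| < 1 ∧ |r₂| < 1 ↔ |r₁ * r₂| < 1 ∧ |r₁ + r₂| < 1 + r₁ * r₂ := by
  simp only [abs_lt]
  constructor
  · rintro ⟨⟨h₁, h₁'⟩, h₂, h₂'⟩
    refine ⟨⟨?_, ?_⟩, ?_, ?_⟩ <;> nlinarith
  · rintro ⟨⟨h, h'⟩, hs, hs'⟩
    refine ⟨⟨?_, ?_⟩, ?_, ?_⟩ <;> nlinarith

theorem quadratic_roots_norm_lt_one_iff (t d : ℝ) :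
    (∀ z : ℂ, z ^ 2 - t * z + d = 0 → ‖z‖ < 1) ↔ |d| < 1 ∧ |t| < 1 + d := by
  rcases le_or_gt (4 * d) (t ^ 2) with hdisc | hdisc
  · set s := √(t ^ 2 - 4 * d)
    have hs : s * s = t ^ 2 - 4 * d := Real.mul_self_sqrt (by linarith)
    rw [forall_quadratic_root_iff (s := (s : ℂ)) (by exact_mod_cast congrArg ofReal hs)]
    have hnorm_half (r : ℝ) : ‖((r : ℂ)) / 2‖ = |r / 2| := by
      rw [← Complex.ofReal_ofNat, ← Complex.ofReal_div, Complex.norm_real, Real.norm_eq_abs]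
    push_cast [← Complex.ofReal_add, ← Complex.ofReal_sub]
    rw [hnorm_half, hnorm_half, abs_lt_one_and_abs_lt_one_iff]
    have hprod : (t + s) / 2 * ((t - s) / 2) = d := by linear_combination -hs / 4
    rw [hprod, show (t + s) / 2 + (t - s) / 2 = t by ring]
  · set y := √(4 * d - t ^ 2)
    have hy : y * y = 4 * d - t ^ 2 := Real.mul_self_sqrt (by linarith)
    have hs : (I * y) * (I * y) = (t : ℂ) ^ 2 - 4 * d := by
      have hy' : (y : ℂ) * y = 4 * d - t ^ 2 := by exact_mod_cast congrArg ofReal hy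
      linear_combination -hy' + (y : ℂ) ^ 2 * I_sq
    have hnorm (y' : ℝ) (hy' : y' * y' = y * y) : ‖((t : ℂ) + I * y') / 2‖ < 1 ↔ d < 1 := by
      rw [← sq_lt_one_iff₀ (norm_nonneg _), Complex.sq_norm, Complex.normSq_apply]
      simp only [div_ofNat_re, add_re, ofReal_re, mul_re, I_re, zero_mul, I_im, ofReal_im,
        mul_zero, sub_self, add_zero, div_ofNat_im, add_im, mul_im, one_mul, zero_add]
      constructor <;> intro <;> nlinarith
    rw [forall_quadratic_root_iff hs, sub_eq_add_neg, ← mul_neg, ← ofReal_neg, hnorm y rfl,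
      hnorm (-y) (neg_mul_neg y y), and_self]
    have hd : 0 < d := by nlinarith
    refine ⟨fun hd1 => ⟨by rwa [abs_of_pos hd], abs_lt_of_sq_lt_sq ?_ (by linarith)⟩,
      fun h => (abs_lt.mp h.1).2⟩
    nlinarith

theorem jury_conditions_iff {p q τ : ℝ} (hp : 0 < p) (hq : 0 < q) (hτ : 0 < τ) :
    |(p * |1 - τ|)| < 1 ∧ |(p + τ * q + |1 - τ|)| < 1 + p * |1 - τ| ↔
      p + q < 1 ∧ τ < 2 * (1 - p) / (1 - p + q) := by
  set u := |1 - τ| with hu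
  have hu0 : 0 ≤ u := abs_nonneg _
  rw [abs_of_nonneg (by positivity), abs_of_nonneg (by positivity)]
  have hmargin : 1 + p * u - (p + τ * q + u) = (1 - p) * (1 - u) - τ * q := by ring
  constructor
  · rintro ⟨hd, ht⟩
    have hkey : τ * q < (1 - p) * (1 - u) := by linarith
    have hτq : 0 < τ * q := by positivity
    have hp1 : p < 1 := by
      by_contra! hp1
      have : 1 < u := by nlinarith
      nlinarith
    rcases abs_cases (1 - τ) with ⟨hu', _⟩ | ⟨hu', _⟩ <;> rw [← hu] at hu' <;> rw [hu'] at hkey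
    · refine ⟨by nlinarith, ?_⟩
      rw [lt_div_iff₀ (by linarith)]
      nlinarith
    · refine ⟨by nlinarith, ?_⟩
      rw [lt_div_iff₀ (by linarith)]
      nlinarith
  · rintro ⟨hpq, hτ2⟩
    rw [lt_div_iff₀ (by linarith)] at hτ2
    have hu1 : u < 1 := by rw [hu, abs_lt]; constructor <;> nlinarith
    refine ⟨by nlinarith, ?_⟩
    suffices τ * q < (1 - p) * (1 - u) by linarith
    rcases abs_cases (1 - τ) with ⟨hu', _⟩ | ⟨hu', _⟩ <;> rw [← hu] at hu' <;> rw [hu'] <;> nlinarith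

theorem eigenvalues_T_modulus_lt_one_iff (α β γ τ : ℝ)
    (hα : 0 < α) (hβ : 0 < β) (hγ : 0 < γ) (hτ : 0 < τ) :
    (∀ lam : ℂ, lam ∈ spectrum ℂ
        ((!![α * β, α; τ * γ * α * β, τ * γ * α + |1 - τ|]).map (algebraMap ℝ ℂ)) →
      ‖lam‖ < 1) ↔
      (α * (β + γ) < 1 ∧ τ < 2 * (1 - α * β) / (1 - α * β + α * γ)) := by
  set T := !![α * β, α; τ * γ * α * β, τ * γ * α + |1 - τ|]
  have htrace : T.trace = α * β + τ * (α * γ) + |1 - τ| := by rw [Matrix.trace_fin_two_of]; ring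
  have hdet : T.det = α * β * |1 - τ| := by rw [Matrix.det_fin_two_of]; ring
  simp only [Matrix.mem_spectrum_map_fin_two_iff, htrace, hdet]
  simp only [coe_algebraMap]
  rw [quadratic_roots_norm_lt_one_iff, jury_conditions_iff (by positivity) (by positivity) hτ,
    mul_add]
end

section
/- Let α, β, γ, τ be positive reals, and let T_γ = [[αβ, αγ], [ταβ, ταγ + |1-τ|]]. Then the maximum row-sum norm ‖T_γ‖_∞ = max{αβ + αγ, ταβ + ταγ + |1-τ|} is strictly less than 1 if and only if α(β+γ) < 1 and 0 < τ < 2/(α(β+γ)+1). -/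
theorem T_gamma_inf_norm_lt_one_iff (α β γ τ : ℝ)
    (hα : 0 < α) (hβ : 0 < β) (hγ : 0 < γ) (hτ : 0 < τ) :
    max (α * β + α * γ) (τ * α * β + τ * α * γ + |1 - τ|) < 1 ↔
      (α * (β + γ) < 1 ∧ τ < 2 / (α * (β + γ) + 1)) := by
  have hs : 0 < α * (β + γ) + 1 := by positivity
  rw [max_lt_iff, lt_div_iff₀ hs]
  constructor
  · rintro ⟨h1, h2⟩
    refine ⟨by nlinarith, ?_⟩
    rcases abs_cases (1 - τ) with ⟨he, _⟩ | ⟨he, _⟩ <;> nlinarith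
  · rintro ⟨h1, h2⟩
    refine ⟨by nlinarith, ?_⟩
    rcases abs_cases (1 - τ) with ⟨he, _⟩ | ⟨he, _⟩ <;> nlinarith
end
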